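/- Let φ be an LTL formula in negation normal form, w an infinite word over 2^Ap, and Y ⊆ ν(φ). If FG_w ⊆ Y and w ⊨ φ, then w ⊨ φ[Y]_μ. -/
import Mathlib


/-- LTL formulas in negation normal form over atomic propositions `Ap`. -/
inductive LTL (Ap : Type) : Type
  | tt : LTL Ap
  | ff : LTL Ap
  | atom (a : Ap) : LTL Ap
  | natom (a : Ap) : LTL Ap
  | conj (φ ψ : LTL Ap) : LTL Ap
  | disj (φ ψ : LTL Ap) : LTL Ap
  | next (φ : LTL Ap) : LTL Ap
  | fut (φ : LTL Ap) : LTL Ap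
  | glob (φ : LTL Ap) : LTL Ap
  | untl (φ ψ : LTL Ap) : LTL Ap
  | wUntl (φ ψ : LTL Ap) : LTL Ap
  | strongRel (φ ψ : LTL Ap) : LTL Ap
  | rel (φ ψ : LTL Ap) : LTL Ap

variable {Ap : Type} [DecidableEq Ap]

/-- The suffix `w_i` of an infinite word. -/
def suffix (w : ℕ → Finset Ap) (i : ℕ) : ℕ → Finset Ap := fun k => w (i + k)

/-- Standard LTL satisfaction over infinite words over `2^Ap`. -/
def Sat : (ℕ → Finset Ap) → LTL Ap → Prop
  | _, .tt => True
  | _, .ff => False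
  | w, .atom a => a ∈ w 0
  | w, .natom a => a ∉ w 0
  | w, .conj φ ψ => Sat w φ ∧ Sat w ψ
  | w, .disj φ ψ => Sat w φ ∨ Sat w ψ
  | w, .next φ => Sat (suffix w 1) φ
  | w, .fut φ => ∃ k, Sat (suffix w k) φ
  | w, .glob φ => ∀ k, Sat (suffix w k) φ
  | w, .untl φ ψ => ∃ k, Sat (suffix w k) ψ ∧ ∀ j < k, Sat (suffix w j) φ
  | w, .wUntl φ ψ =>
      (∀ k, Sat (suffix w k) φ) ∨ (∃ k, Sat (suffix w k) ψ ∧ ∀ j < k, Sat (suffix w j) φ)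
  | w, .strongRel φ ψ => ∃ k, Sat (suffix w k) φ ∧ ∀ j ≤ k, Sat (suffix w j) ψ
  | w, .rel φ ψ =>
      (∀ k, Sat (suffix w k) ψ) ∨ (∃ k, Sat (suffix w k) φ ∧ ∀ j ≤ k, Sat (suffix w j) ψ)

/-- The "after" function on a single letter `ν ∈ 2^Ap`. -/
def afLetter : LTL Ap → Finset Ap → LTL Ap
  | .tt, _ => .tt
  | .ff, _ => .ff
  | .atom a, ν => if a ∈ ν then .tt else .ff
  | .natom a, ν => if a ∈ ν then .ff else .tt
  | .conj φ ψ, ν => .conj (afLetter φ ν) (afLetter ψ ν)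
  | .disj φ ψ, ν => .disj (afLetter φ ν) (afLetter ψ ν)
  | .next φ, _ => φ
  | .fut φ, ν => .disj (afLetter φ ν) (.fut φ)
  | .glob φ, ν => .conj (afLetter φ ν) (.glob φ)
  | .untl φ ψ, ν => .disj (afLetter ψ ν) (.conj (afLetter φ ν) (.untl φ ψ))
  | .wUntl φ ψ, ν => .disj (afLetter ψ ν) (.conj (afLetter φ ν) (.wUntl φ ψ))
  | .strongRel φ ψ, ν => .conj (afLetter ψ ν) (.disj (afLetter φ ν) (.strongRel φ ψ))
  | .rel φ ψ, ν => .conj (afLetter ψ ν) (.disj (afLetter φ ν) (.rel φ ψ))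

/-- The "after" function extended to finite words. -/
def af : LTL Ap → List (Finset Ap) → LTL Ap
  | φ, [] => φ
  | φ, ν :: u => af (afLetter φ ν) u

/-- The finite prefix `w_{0i} = w[0]⋯w[i-1]` of an infinite word. -/
def prefixWord (w : ℕ → Finset Ap) (i : ℕ) : List (Finset Ap) :=
  (List.range i).map w

/-- The finite infix `w_{ij} = w[i]⋯w[j-1]` of an infinite word. -/
def infixWord (w : ℕ → Finset Ap) (i j : ℕ) : List (Finset Ap) :=
  (List.range (j - i)).map (fun k => w (i + k))

/-- Evaluation of a formula as a propositional formula, where every maximal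
proper subformula (root not `∧`/`∨`) is treated as a propositional variable
whose truth value is given by the assignment `v`. -/
def propEval (v : LTL Ap → Prop) : LTL Ap → Prop
  | .tt => True
  | .ff => False
  | .conj φ ψ => propEval v φ ∧ propEval v ψ
  | .disj φ ψ => propEval v φ ∨ propEval v ψ
  | φ => v φ

/-- Propositional equivalence `φ ≡_P ψ`. -/
def propEquiv (φ ψ : LTL Ap) : Prop := ∀ v, propEval v φ ↔ propEval v ψ

/-- The set of subformulas of a formula (including itself). -/
def subf : LTL Ap → Set (LTL Ap)
  | .tt => {LTL.tt}
  | .ff => {LTL.ff}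
  | .atom a => {LTL.atom a}
  | .natom a => {LTL.natom a}
  | .conj φ ψ => insert (.conj φ ψ) (subf φ ∪ subf ψ)
  | .disj φ ψ => insert (.disj φ ψ) (subf φ ∪ subf ψ)
  | .next φ => insert (.next φ) (subf φ)
  | .fut φ => insert (.fut φ) (subf φ)
  | .glob φ => insert (.glob φ) (subf φ)
  | .untl φ ψ => insert (.untl φ ψ) (subf φ ∪ subf ψ)
  | .wUntl φ ψ => insert (.wUntl φ ψ) (subf φ ∪ subf ψ)
  | .strongRel φ ψ => insert (.strongRel φ ψ) (subf φ ∪ subf ψ)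
  | .rel φ ψ => insert (.rel φ ψ) (subf φ ∪ subf ψ)

/-- A formula is proper if its root is not a conjunction or a disjunction. -/
def isProper : LTL Ap → Prop
  | .conj _ _ => False
  | .disj _ _ => False
  | _ => True

/-- The set of proper subformulas of `φ`. -/
def properSubf (φ : LTL Ap) : Set (LTL Ap) := {ψ | ψ ∈ subf φ ∧ isProper ψ}

/-- Formulas whose root is a least-fixed-point operator (`F`, `U`, `M`). -/
def isMu : LTL Ap → Prop
  | .fut _ => True
  | .untl _ _ => True
  | .strongRel _ _ => True
  | _ => False

/-- Formulas whose root is a greatest-fixed-point operator (`G`, `W`, `R`). -/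
def isNu : LTL Ap → Prop
  | .glob _ => True
  | .wUntl _ _ => True
  | .rel _ _ => True
  | _ => False

/-- `μ(φ)`: subformulas of `φ` of the form `Fψ`, `ψ₁Uψ₂`, `ψ₁Mψ₂`. -/
def muSet (φ : LTL Ap) : Set (LTL Ap) := {ψ | ψ ∈ subf φ ∧ isMu ψ}

/-- `ν(φ)`: subformulas of `φ` of the form `Gψ`, `ψ₁Wψ₂`, `ψ₁Rψ₂`. -/
def nuSet (φ : LTL Ap) : Set (LTL Ap) := {ψ | ψ ∈ subf φ ∧ isNu ψ}

/-- `GF_w = {ψ ∈ μ(φ) | w ⊨ GFψ}`. -/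
def GFSet (φ : LTL Ap) (w : ℕ → Finset Ap) : Set (LTL Ap) :=
  {ψ | ψ ∈ muSet φ ∧ Sat w (.glob (.fut ψ))}

/-- `F_w = {ψ ∈ μ(φ) | w ⊨ Fψ}`. -/
def FSet (φ : LTL Ap) (w : ℕ → Finset Ap) : Set (LTL Ap) :=
  {ψ | ψ ∈ muSet φ ∧ Sat w (.fut ψ)}

/-- `FG_w = {ψ ∈ ν(φ) | w ⊨ FGψ}`. -/
def FGSet (φ : LTL Ap) (w : ℕ → Finset Ap) : Set (LTL Ap) :=
  {ψ | ψ ∈ nuSet φ ∧ Sat w (.fut (.glob ψ))}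

/-- `G_w = {ψ ∈ ν(φ) | w ⊨ Gψ}`. -/
def GSet (φ : LTL Ap) (w : ℕ → Finset Ap) : Set (LTL Ap) :=
  {ψ | ψ ∈ nuSet φ ∧ Sat w (.glob ψ)}

open scoped Classical in
/-- `φ[X]_ν`. -/
noncomputable def evalNu (X : Set (LTL Ap)) : LTL Ap → LTL Ap
  | .tt => .tt
  | .ff => .ff
  | .atom a => .atom a
  | .natom a => .natom a
  | .conj φ ψ => .conj (evalNu X φ) (evalNu X ψ)
  | .disj φ ψ => .disj (evalNu X φ) (evalNu X ψ)
  | .next φ => .next (evalNu X φ)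
  | .glob φ => .glob (evalNu X φ)
  | .wUntl φ ψ => .wUntl (evalNu X φ) (evalNu X ψ)
  | .rel φ ψ => .rel (evalNu X φ) (evalNu X ψ)
  | .fut φ => if LTL.fut φ ∈ X then .tt else .ff
  | .untl φ ψ => if LTL.untl φ ψ ∈ X then .wUntl (evalNu X φ) (evalNu X ψ) else .ff
  | .strongRel φ ψ => if LTL.strongRel φ ψ ∈ X then .rel (evalNu X φ) (evalNu X ψ) else .ff

open scoped Classical in
/-- `φ[Y]_μ`. -/
noncomputable def evalMu (Y : Set (LTL Ap)) : LTL Ap → LTL Ap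
  | .tt => .tt
  | .ff => .ff
  | .atom a => .atom a
  | .natom a => .natom a
  | .conj φ ψ => .conj (evalMu Y φ) (evalMu Y ψ)
  | .disj φ ψ => .disj (evalMu Y φ) (evalMu Y ψ)
  | .next φ => .next (evalMu Y φ)
  | .fut φ => .fut (evalMu Y φ)
  | .untl φ ψ => .untl (evalMu Y φ) (evalMu Y ψ)
  | .strongRel φ ψ => .strongRel (evalMu Y φ) (evalMu Y ψ)
  | .glob φ => if LTL.glob φ ∈ Y then .tt else .ff
  | .wUntl φ ψ => if LTL.wUntl φ ψ ∈ Y then .tt else .untl (evalMu Y φ) (evalMu Y ψ)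
  | .rel φ ψ => if LTL.rel φ ψ ∈ Y then .tt else .strongRel (evalMu Y φ) (evalMu Y ψ)

/-- Concatenation `u·w` of a finite word and an infinite word. -/
def wordAppend (u : List (Finset Ap)) (w : ℕ → Finset Ap) : ℕ → Finset Ap :=
  fun i => if h : i < u.length then u.get ⟨i, h⟩ else w (i - u.length)

/-- The smallest set of formulas containing `tt`, `ff` and all elements of `S`
that is closed under conjunction and disjunction. -/
inductive PosBool (S : Set (LTL Ap)) : LTL Ap → Prop
  | tt : PosBool S .tt
  | ff : PosBool S .ff
  | base {ψ : LTL Ap} : ψ ∈ S → PosBool S ψ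
  | conj {φ ψ : LTL Ap} : PosBool S φ → PosBool S ψ → PosBool S (.conj φ ψ)
  | disj {φ ψ : LTL Ap} : PosBool S φ → PosBool S ψ → PosBool S (.disj φ ψ)

/-- `Reach(φ)`: the set of `≡_P`-equivalence classes of the formulas `af(φ,u)`
over all finite words `u`. -/
def Reach (φ : LTL Ap) : Set (Set (LTL Ap)) :=
  {C | ∃ u : List (Finset Ap), C = {ψ | propEquiv ψ (af φ u)}}

/-- The fragment `μLTL`: only `tt`, `ff`, literals, `∧`, `∨`, `X`, `F`, `U`, `M`. -/
def inMuLTL : LTL Ap → Prop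
  | .tt => True
  | .ff => True
  | .atom _ => True
  | .natom _ => True
  | .conj φ ψ => inMuLTL φ ∧ inMuLTL ψ
  | .disj φ ψ => inMuLTL φ ∧ inMuLTL ψ
  | .next φ => inMuLTL φ
  | .fut φ => inMuLTL φ
  | .untl φ ψ => inMuLTL φ ∧ inMuLTL ψ
  | .strongRel φ ψ => inMuLTL φ ∧ inMuLTL ψ
  | .glob _ => False
  | .wUntl _ _ => False
  | .rel _ _ => False

/-- The fragment `νLTL`: only `tt`, `ff`, literals, `∧`, `∨`, `X`, `G`, `W`, `R`. -/
def inNuLTL : LTL Ap → Prop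
  | .tt => True
  | .ff => True
  | .atom _ => True
  | .natom _ => True
  | .conj φ ψ => inNuLTL φ ∧ inNuLTL ψ
  | .disj φ ψ => inNuLTL φ ∧ inNuLTL ψ
  | .next φ => inNuLTL φ
  | .glob φ => inNuLTL φ
  | .wUntl φ ψ => inNuLTL φ ∧ inNuLTL ψ
  | .rel φ ψ => inNuLTL φ ∧ inNuLTL ψ
  | .fut _ => False
  | .untl _ _ => False
  | .strongRel _ _ => False

lemma suffix_suffix (w : ℕ → Finset Ap) (i k : ℕ) :
    suffix (suffix w i) k = suffix w (i + k) := by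
  funext n; simp [suffix, Nat.add_assoc]

lemma suffix_zero (w : ℕ → Finset Ap) : suffix w 0 = w := by
  funext n; simp [suffix]

lemma self_mem_subf (ψ : LTL Ap) : ψ ∈ subf ψ := by
  cases ψ <;> simp [subf]

lemma key_stmt13 (φ : LTL Ap) (w : ℕ → Finset Ap) (Y : Set (LTL Ap))
    (hFG : FGSet φ w ⊆ Y) :
    ∀ ψ : LTL Ap, subf ψ ⊆ subf φ → ∀ i, Sat (suffix w i) ψ →
      Sat (suffix w i) (evalMu Y ψ) := by
  intro ψ
  induction ψ with
  | tt => intro _ i _; trivial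
  | ff => intro _ i h; exact h
  | atom a => intro _ i h; exact h
  | natom a => intro _ i h; exact h
  | conj φ₁ φ₂ ih1 ih2 =>
    intro hs i h
    have hs1 : subf φ₁ ⊆ subf φ := fun x hx => hs (by simp [subf]; tauto)
    have hs2 : subf φ₂ ⊆ subf φ := fun x hx => hs (by simp [subf]; tauto)
    exact ⟨ih1 hs1 i h.1, ih2 hs2 i h.2⟩
  | disj φ₁ φ₂ ih1 ih2 =>
    intro hs i h
    have hs1 : subf φ₁ ⊆ subf φ := fun x hx => hs (by simp [subf]; tauto)
    have hs2 : subf φ₂ ⊆ subf φ := fun x hx => hs (by simp [subf]; tauto)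
    exact h.imp (ih1 hs1 i) (ih2 hs2 i)
  | next φ₁ ih =>
    intro hs i h
    have hs1 : subf φ₁ ⊆ subf φ := fun x hx => hs (by simp [subf]; tauto)
    have := ih hs1 (i + 1) (by rwa [← suffix_suffix])
    show Sat (suffix (suffix w i) 1) (evalMu Y φ₁)
    rwa [suffix_suffix]
  | fut φ₁ ih =>
    intro hs i h
    have hs1 : subf φ₁ ⊆ subf φ := fun x hx => hs (by simp [subf]; tauto)
    obtain ⟨k, hk⟩ := h
    exact ⟨k, by rw [suffix_suffix]; exact ih hs1 (i + k) (by rwa [← suffix_suffix])⟩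
  | glob φ₁ ih =>
    intro hs i h
    have hmem : LTL.glob φ₁ ∈ Y := by
      refine hFG ⟨⟨hs (self_mem_subf _), trivial⟩, i, fun k => fun k' => ?_⟩
      rw [suffix_suffix, suffix_suffix]
      have := h (k + k')
      rwa [suffix_suffix] at this
    simp [evalMu, hmem, Sat]
  | untl φ₁ φ₂ ih1 ih2 =>
    intro hs i h
    have hs1 : subf φ₁ ⊆ subf φ := fun x hx => hs (by simp [subf]; tauto)
    have hs2 : subf φ₂ ⊆ subf φ := fun x hx => hs (by simp [subf]; tauto)
    obtain ⟨k, hk, hj⟩ := h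
    refine ⟨k, ?_, fun j hjk => ?_⟩
    · rw [suffix_suffix]; exact ih2 hs2 (i + k) (by rwa [← suffix_suffix])
    · rw [suffix_suffix]; exact ih1 hs1 (i + j) (by rw [← suffix_suffix]; exact hj j hjk)
  | strongRel φ₁ φ₂ ih1 ih2 =>
    intro hs i h
    have hs1 : subf φ₁ ⊆ subf φ := fun x hx => hs (by simp [subf]; tauto)
    have hs2 : subf φ₂ ⊆ subf φ := fun x hx => hs (by simp [subf]; tauto)
    obtain ⟨k, hk, hj⟩ := h
    refine ⟨k, ?_, fun j hjk => ?_⟩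
    · rw [suffix_suffix]; exact ih1 hs1 (i + k) (by rwa [← suffix_suffix])
    · rw [suffix_suffix]; exact ih2 hs2 (i + j) (by rw [← suffix_suffix]; exact hj j hjk)
  | wUntl φ₁ φ₂ ih1 ih2 =>
    intro hs i h
    have hs1 : subf φ₁ ⊆ subf φ := fun x hx => hs (by simp [subf]; tauto)
    have hs2 : subf φ₂ ⊆ subf φ := fun x hx => hs (by simp [subf]; tauto)
    by_cases hmem : LTL.wUntl φ₁ φ₂ ∈ Y
    · simp [evalMu, hmem, Sat]
    · rcases h with hG | ⟨k, hk, hj⟩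
      · exfalso
        apply hmem
        refine hFG ⟨⟨hs (self_mem_subf _), trivial⟩, i, fun k => Or.inl fun k' => ?_⟩
        rw [suffix_suffix, suffix_suffix]
        have := hG (k + k')
        rwa [suffix_suffix] at this
      · have hgoal : Sat (suffix w i) (LTL.untl (evalMu Y φ₁) (evalMu Y φ₂)) := by
          refine ⟨k, ?_, fun j hjk => ?_⟩
          · rw [suffix_suffix]; exact ih2 hs2 (i + k) (by rwa [← suffix_suffix])
          · rw [suffix_suffix]; exact ih1 hs1 (i + j) (by rw [← suffix_suffix]; exact hj j hjk)
        simpa [evalMu, hmem] using hgoal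
  | rel φ₁ φ₂ ih1 ih2 =>
    intro hs i h
    have hs1 : subf φ₁ ⊆ subf φ := fun x hx => hs (by simp [subf]; tauto)
    have hs2 : subf φ₂ ⊆ subf φ := fun x hx => hs (by simp [subf]; tauto)
    by_cases hmem : LTL.rel φ₁ φ₂ ∈ Y
    · simp [evalMu, hmem, Sat]
    · rcases h with hG | ⟨k, hk, hj⟩
      · exfalso
        apply hmem
        refine hFG ⟨⟨hs (self_mem_subf _), trivial⟩, i, fun k => Or.inl fun k' => ?_⟩
        rw [suffix_suffix, suffix_suffix]
        have := hG (k + k')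
        rwa [suffix_suffix] at this
      · have hgoal : Sat (suffix w i) (LTL.strongRel (evalMu Y φ₁) (evalMu Y φ₂)) := by
          refine ⟨k, ?_, fun j hjk => ?_⟩
          · rw [suffix_suffix]; exact ih1 hs1 (i + k) (by rwa [← suffix_suffix])
          · rw [suffix_suffix]; exact ih2 hs2 (i + j) (by rw [← suffix_suffix]; exact hj j hjk)
        simpa [evalMu, hmem] using hgoal

/-- if `FG_w ⊆ Y` and `w ⊨ φ` then `w ⊨ φ[Y]_μ`. -/
theorem stmt13 {Ap : Type} [DecidableEq Ap] [Fintype Ap]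
    (φ : LTL Ap) (w : ℕ → Finset Ap) (Y : Set (LTL Ap))
    (hY : Y ⊆ nuSet φ) (hFG : FGSet φ w ⊆ Y) (h : Sat w φ) :
    Sat w (evalMu Y φ) := by
  have := key_stmt13 φ w Y hFG φ (fun x hx => hx) 0 (by rwa [suffix_zero])
  rwa [suffix_zero] at this
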